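/- Let A and B be positive semi-definite operators on a finite-dimensional Hilbert space. Then the infimum over operators T with 0 ≤ T ≤ I of Tr{(I−T)A} + Tr{TB} equals (1/2)(Tr{A+B} − ‖A−B‖₁), and this infimum is achieved by the positive spectral projection T = {A − B ≥ 0}. -/

import Mathlib

open Matrix BigOperators Kronecker
open scoped Classical ComplexOrder

variable {d : Type*} [Fintype d] [DecidableEq d]

/-- Trace norm of a matrix. -/
noncomputable def traceNorm (A : Matrix d d ℂ) : ℝ :=
  (((Matrix.posSemidef_conjTranspose_mul_self A).1.eigenvectorUnitary : Matrix d d ℂ) *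
      Matrix.diagonal (fun i => ((Real.sqrt
        ((Matrix.posSemidef_conjTranspose_mul_self A).1.eigenvalues i) : ℝ) : ℂ)) *
      (star (Matrix.posSemidef_conjTranspose_mul_self A).1.eigenvectorUnitary :
        Matrix d d ℂ)).trace.re

/-- Spectral functional calculus for a Hermitian matrix. -/
noncomputable def specFun {A : Matrix d d ℂ} (hA : A.IsHermitian) (f : ℝ → ℝ) :
    Matrix d d ℂ :=
  (hA.eigenvectorUnitary : Matrix d d ℂ) *
    Matrix.diagonal (fun i => (f (hA.eigenvalues i) : ℂ)) *
    star (hA.eigenvectorUnitary : Matrix d d ℂ)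

/-- Matrix power via functional calculus, with the convention `0 ^ s = 0` on kernels.
For `s = -1/2` this gives the square root of the Moore–Penrose inverse. -/
noncomputable def mpow (A : Matrix d d ℂ) (s : ℝ) : Matrix d d ℂ :=
  if hA : A.PosSemidef then
    specFun hA.1 (fun t => if t = 0 then 0 else t ^ s)
  else 0

/-- Base-2 matrix logarithm via functional calculus, `log 0 := 0` on kernels. -/
noncomputable def mlog (A : Matrix d d ℂ) : Matrix d d ℂ :=
  if hA : A.PosSemidef then
    specFun hA.1 (fun t => if t = 0 then 0 else Real.logb 2 t)
  else 0

/-- Positive spectral projection `{X ≥ 0}` of a Hermitian matrix. -/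
noncomputable def posProj {A : Matrix d d ℂ} (hA : A.IsHermitian) : Matrix d d ℂ :=
  specFun hA (fun t => if 0 ≤ t then 1 else 0)

/-- A density operator: positive semi-definite with unit trace. -/
def IsDensity (ρ : Matrix d d ℂ) : Prop := ρ.PosSemidef ∧ ρ.trace = 1

/-- A measurement operator: `0 ≤ Λ ≤ I`. -/
def IsMeasOp (Λ : Matrix d d ℂ) : Prop := Λ.PosSemidef ∧ (1 - Λ).PosSemidef

/-- `n`-fold tensor power of a matrix. -/
def tpow (ρ : Matrix d d ℂ) (n : ℕ) : Matrix (Fin n → d) (Fin n → d) ℂ :=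
  Matrix.of fun x y => ∏ i, ρ (x i) (y i)

/-- Partial trace over the right (second) tensor factor. -/
noncomputable def ptraceR {a b : Type*} [Fintype a] [Fintype b]
    (ρ : Matrix (a × b) (a × b) ℂ) : Matrix a a ℂ :=
  Matrix.of fun i j => ∑ k, ρ (i, k) (j, k)

/-- Partial trace over the left (first) tensor factor. -/
noncomputable def ptraceL {a b : Type*} [Fintype a] [Fintype b]
    (ρ : Matrix (a × b) (a × b) ℂ) : Matrix b b ℂ :=
  Matrix.of fun i j => ∑ k, ρ (k, i) (k, j)

/-- Quantum relative entropy (base 2), via the `mlog` convention. -/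
noncomputable def qRelEnt (ρ σ : Matrix d d ℂ) : ℝ :=
  ((ρ * (mlog ρ - mlog σ)).trace).re

/-- ε-hypothesis testing relative entropy. -/
noncomputable def DH (ε : ℝ) (ρ σ : Matrix d d ℂ) : ℝ :=
  -Real.logb 2 (sInf {x : ℝ | ∃ Λ : Matrix d d ℂ,
    IsMeasOp Λ ∧ 1 - ε ≤ ((Λ * ρ).trace).re ∧ x = ((Λ * σ).trace).re})

/-- Petz–Rényi relative entropy of order α. -/
noncomputable def DAlpha (α : ℝ) (ρ σ : Matrix d d ℂ) : ℝ :=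
  (1 / (α - 1)) * Real.logb 2 (((mpow ρ α * mpow σ (1 - α)).trace).re)

/-- Shannon entropy (bits) of a probability vector. -/
noncomputable def shannon (p : d → ℝ) : ℝ := -∑ x, p x * Real.logb 2 (p x)

/-- von Neumann entropy (bits). -/
noncomputable def vnEntropy (A : Matrix d d ℂ) : ℝ :=
  if hA : A.IsHermitian then -∑ i, hA.eigenvalues i * Real.logb 2 (hA.eigenvalues i) else 0

/-- Collision (order-2) conditional entropy `H₂(C|S)` of a bipartite state on `s ⊗ c`. -/
noncomputable def H2cond {s c : Type*} [Fintype s] [Fintype c] [DecidableEq s] [DecidableEq c]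
    (ω : Matrix (s × c) (s × c) ℂ) : ℝ :=
  -Real.logb 2 ((ω * (mpow (ptraceR ω) (-(1/2)) ⊗ₖ (1 : Matrix c c ℂ)) *
      ω * (mpow (ptraceR ω) (-(1/2)) ⊗ₖ (1 : Matrix c c ℂ))).trace).re

/-!
With `X = A - B`, the error of a test `T` is `Tr A - Re Tr (T X)`. Splitting `X = X⁺ - X⁻` into
positive and negative parts, `0 ≤ T ≤ I` gives `Re Tr (T X) ≤ Tr X⁺ - Re Tr ((I - T) X⁺) ≤ Tr X⁺`,
with equality for the projection `{X ≥ 0}`, since `{X ≥ 0} X = X⁺`. Finally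
`‖X‖₁ = Tr X⁺ + Tr X⁻` and `Tr X = Tr X⁺ - Tr X⁻` turn `Tr A - Tr X⁺` into
`(1/2)(Tr (A + B) - ‖X‖₁)`.
-/

namespace Matrix

variable {𝕜 n : Type*} [RCLike 𝕜] [Fintype n] [DecidableEq n]

open scoped MatrixOrder in
theorem PosSemidef.trace_mul_nonneg {S T : Matrix n n 𝕜} (hS : S.PosSemidef)
    (hT : T.PosSemidef) : 0 ≤ (S * T).trace := by
  obtain ⟨R, rfl⟩ := CStarAlgebra.nonneg_iff_eq_star_mul_self.mp hS.nonneg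
  rw [mul_assoc, trace_mul_comm, star_eq_conjTranspose]
  exact (hT.mul_mul_conjTranspose_same R).trace_nonneg

theorem IsHermitian.trace_cfc {X : Matrix n n 𝕜} (hX : X.IsHermitian) (f : ℝ → ℝ) :
    (cfc f X).trace = ∑ i, (f (hX.eigenvalues i) : 𝕜) := by
  rw [hX.cfc_eq, IsHermitian.cfc, Unitary.conjStarAlgAut_apply, trace_mul_cycle,
    Unitary.coe_star_mul_self, one_mul, trace_diagonal]
  rfl

end Matrix

open scoped MatrixOrder

section Hermitian

variable {X : Matrix d d ℂ} (hX : X.IsHermitian)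
include hX

theorem specFun_eq_cfc (f : ℝ → ℝ) : specFun hX f = cfc f X := by
  rw [hX.cfc_eq, Matrix.IsHermitian.cfc, Unitary.conjStarAlgAut_apply]
  rfl

theorem re_trace_cfc (f : ℝ → ℝ) : (cfc f X).trace.re = ∑ i, f (hX.eigenvalues i) := by
  rw [hX.trace_cfc, Complex.re_sum]
  rfl

theorem traceNorm_eq_sum_abs_eigenvalues : traceNorm X = ∑ i, |hX.eigenvalues i| := by
  have hsq : Xᴴ * X = cfc (fun t : ℝ => t * t) X := by
    rw [cfc_mul (fun t : ℝ => t) (fun t : ℝ => t) X, cfc_id' ℝ X, hX.eq]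
  have habs : cfc Real.sqrt (Xᴴ * X) = cfc (fun t : ℝ => |t|) X := by
    rw [hsq, ← cfc_comp' Real.sqrt (fun t : ℝ => t * t) X]
    exact cfc_congr fun t _ => Real.sqrt_mul_self_eq_abs t
  show (specFun (posSemidef_conjTranspose_mul_self X).1 Real.sqrt).trace.re = _
  rw [specFun_eq_cfc, habs, re_trace_cfc hX]

theorem re_trace_posProj_mul : (posProj hX * X).trace.re = ∑ i, (hX.eigenvalues i)⁺ := by
  have hstep : ContinuousOn (fun t : ℝ => if 0 ≤ t then (1 : ℝ) else 0) (spectrum ℝ X) :=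
    X.finite_real_spectrum.continuousOn _
  have hmul : posProj hX * X = cfc (fun t : ℝ => t⁺) X := calc
    posProj hX * X
        = cfc (fun t : ℝ => if 0 ≤ t then (1 : ℝ) else 0) X * cfc (fun t : ℝ => t) X := by
      rw [posProj, specFun_eq_cfc hX, cfc_id' ℝ X]
    _ = cfc (fun t : ℝ => (if 0 ≤ t then (1 : ℝ) else 0) * t) X := (cfc_mul _ _ X hstep).symm
    _ = cfc (fun t : ℝ => t⁺) X := cfc_congr fun t _ => by
      split_ifs with h
      · rw [one_mul, posPart_eq_self.mpr h]
      · rw [zero_mul, posPart_eq_zero.mpr (not_le.mp h).le]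
  rw [hmul, re_trace_cfc hX]

theorem re_trace_mul_le_sum_posPart_eigenvalues {T : Matrix d d ℂ} (hT : T.PosSemidef)
    (hT1 : (1 - T).PosSemidef) : (T * X).trace.re ≤ ∑ i, (hX.eigenvalues i)⁺ := by
  set P := cfc (fun t : ℝ => t⁺) X
  set N := cfc (fun t : ℝ => t⁻) X
  have hX_eq : X = P - N := by
    rw [← cfc_sub (fun t : ℝ => t⁺) (fun t : ℝ => t⁻) X]
    simp only [posPart_sub_negPart, cfc_id' ℝ X]
  have hP : P.PosSemidef := (cfc_nonneg fun t _ => posPart_nonneg t).posSemidef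
  have hN : N.PosSemidef := (cfc_nonneg fun t _ => negPart_nonneg t).posSemidef
  have hTP : 0 ≤ ((1 - T) * P).trace.re := (Complex.nonneg_iff.mp (hT1.trace_mul_nonneg hP)).1
  have hTN : 0 ≤ (T * N).trace.re := (Complex.nonneg_iff.mp (hT.trace_mul_nonneg hN)).1
  calc (T * X).trace.re = P.trace.re - ((1 - T) * P).trace.re - (T * N).trace.re := by
        rw [hX_eq, mul_sub, sub_mul, one_mul, trace_sub, trace_sub, Complex.sub_re, Complex.sub_re]
        ring
    _ ≤ P.trace.re := by linarith
    _ = ∑ i, (hX.eigenvalues i)⁺ := re_trace_cfc hX _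

end Hermitian

theorem half_re_trace_add_sub_traceNorm {A B : Matrix d d ℂ} (h : (A - B).IsHermitian) :
    (1 / 2) * ((A + B).trace.re - traceNorm (A - B)) =
      A.trace.re - ∑ i, (h.eigenvalues i)⁺ := by
  have htrace :
      A.trace.re - B.trace.re = ∑ i, (h.eigenvalues i)⁺ - ∑ i, (h.eigenvalues i)⁻ := by
    rw [← Finset.sum_sub_distrib, ← Complex.sub_re, ← trace_sub, h.trace_eq_sum_eigenvalues,
      Complex.re_sum]
    simp only [posPart_sub_negPart]
    rfl
  have hnorm : traceNorm (A - B) = ∑ i, (h.eigenvalues i)⁺ + ∑ i, (h.eigenvalues i)⁻ := by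
    rw [← Finset.sum_add_distrib, traceNorm_eq_sum_abs_eigenvalues h]
    simp only [posPart_add_negPart]
  rw [trace_add, Complex.add_re, hnorm]
  linarith

/-- **Optimal symmetric hypothesis test (Holevo–Helstrom).** For positive semi-definite `A, B`,
the infimum over tests `0 ≤ T ≤ I` of `Tr{(I-T)A} + Tr{TB}` equals
`(1/2)(Tr{A+B} - ‖A-B‖₁)`, and is achieved by the positive spectral projection `{A - B ≥ 0}`. -/
theorem symmetric_test_optimal (A B : Matrix d d ℂ)
    (hA : A.PosSemidef) (hB : B.PosSemidef) :
    (((1 - posProj (hA.1.sub hB.1)) * A).trace).re +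
        ((posProj (hA.1.sub hB.1) * B).trace).re =
      (1 / 2) * (((A + B).trace).re - traceNorm (A - B)) ∧
    ∀ T : Matrix d d ℂ, T.PosSemidef → (1 - T).PosSemidef →
      (1 / 2) * (((A + B).trace).re - traceNorm (A - B)) ≤
        (((1 - T) * A).trace).re + ((T * B).trace).re := by
  have hX : (A - B).IsHermitian := hA.1.sub hB.1
  have error_eq : ∀ T : Matrix d d ℂ,
      ((1 - T) * A).trace.re + (T * B).trace.re = A.trace.re - (T * (A - B)).trace.re := by
    intro T
    rw [sub_mul, one_mul, mul_sub, trace_sub, trace_sub, Complex.sub_re, Complex.sub_re]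
    ring
  rw [half_re_trace_add_sub_traceNorm hX]
  refine ⟨?_, fun T hT hT1 => ?_⟩
  · rw [error_eq, re_trace_posProj_mul hX]
  · rw [error_eq]
    linarith [re_trace_mul_le_sum_posPart_eigenvalues hX hT hT1]
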